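/- Let N ≥ 4. If v ∈ C¹((0,1)) satisfies ∫₀¹ v(x)² x^{3/2}(1-x)^{N/2-1} dx < ∞ and ∫₀¹ (x(1-x)) v'(x)² x^{3/2}(1-x)^{N/2-1} dx < ∞, then there exists a constant C > 0 such that |v(x)| ≤ C x^{-3/4} (1-x)^{-N/4+1/2} for all x ∈ (0,1). -/

import Mathlib

open Real MeasureTheory Set Filter Topology

/-!
Anchor at `1/2`. By the fundamental theorem of calculus and the weighted Cauchy–Schwarz
inequality, `(v x - v (1/2))² ≤ E · ∫ ρ⁻¹` over the interval between `x` and `1/2`, where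
`ρ(t) = t(1-t) · t^{3/2} (1-t)^{N/2-1}` is the weight of the energy `E = ∫ ρ v'²`. Since
`ρ(t)⁻¹ = t^{-5/2} (1-t)^{-N/2}` has both exponents below `-1`, the latter
integral is `O(x^{-3/2} (1-x)^{1-N/2})`, the square of the claimed profile.
-/

theorem sq_integral_le_integral_mul_integral_inv {g ρ : ℝ → ℝ} {a b : ℝ} (hab : a ≤ b)
    (hg : ContinuousOn g (Icc a b)) (hρ : ContinuousOn ρ (Icc a b))
    (hρ0 : ∀ t ∈ Icc a b, 0 < ρ t) :
    (∫ t in a..b, g t) ^ 2 ≤ (∫ t in a..b, ρ t * g t ^ 2) * ∫ t in a..b, (ρ t)⁻¹ := by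
  rw [← uIcc_of_le hab] at hg hρ hρ0
  have hρinv : ContinuousOn (fun t => (ρ t)⁻¹) (uIcc a b) :=
    hρ.inv₀ fun t ht => (hρ0 t ht).ne'
  -- `0 ≤ ∫ ρ (s g + ρ⁻¹)²` is a quadratic in `s`, so its discriminant is nonpositive
  have hquad : ∀ s : ℝ, 0 ≤ (∫ t in a..b, ρ t * g t ^ 2) * (s * s)
      + 2 * (∫ t in a..b, g t) * s + ∫ t in a..b, (ρ t)⁻¹ := by
    intro s
    have hexp : ∀ t ∈ uIcc a b, ρ t * (s * g t + (ρ t)⁻¹) ^ 2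
        = ρ t * g t ^ 2 * (s * s) + 2 * g t * s + (ρ t)⁻¹ := by
      intro t ht
      have := (hρ0 t ht).ne'
      field_simp
      ring
    calc (0 : ℝ) ≤ ∫ t in a..b, ρ t * (s * g t + (ρ t)⁻¹) ^ 2 :=
          intervalIntegral.integral_nonneg hab fun t ht =>
            mul_nonneg (hρ0 t (Icc_subset_uIcc ht)).le (sq_nonneg _)
      _ = ∫ t in a..b, (ρ t * g t ^ 2 * (s * s) + 2 * g t * s + (ρ t)⁻¹) :=
          intervalIntegral.integral_congr hexp
      _ = _ := by
          rw [intervalIntegral.integral_add, intervalIntegral.integral_add,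
            intervalIntegral.integral_mul_const, intervalIntegral.integral_mul_const,
            intervalIntegral.integral_const_mul]
          all_goals exact ContinuousOn.intervalIntegrable (by fun_prop)
  have := discrim_le_zero hquad
  rw [discrim] at this
  nlinarith

theorem sq_sub_le_integral_mul_integral_inv {f ρ : ℝ → ℝ} {s : Set ℝ} {a b : ℝ}
    (hs : IsOpen s) (hf : ContDiffOn ℝ 1 f s) (hρ : ContinuousOn ρ s)
    (hρ0 : ∀ t ∈ s, 0 < ρ t) (hab : a ≤ b) (hsub : Icc a b ⊆ s) :
    (f b - f a) ^ 2 ≤ (∫ t in a..b, ρ t * deriv f t ^ 2) * ∫ t in a..b, (ρ t)⁻¹ := by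
  have hf' : ContinuousOn (deriv f) (Icc a b) :=
    (hf.continuousOn_deriv_of_isOpen hs le_rfl).mono hsub
  have hdiff : ∀ t ∈ uIcc a b, DifferentiableAt ℝ f t := fun t ht =>
    (hf.differentiableOn one_ne_zero).differentiableAt
      (hs.mem_nhds (hsub (uIcc_of_le hab ▸ ht)))
  rw [← intervalIntegral.integral_deriv_eq_sub hdiff (hf'.intervalIntegrable_of_Icc hab)]
  exact sq_integral_le_integral_mul_integral_inv hab hf' (hρ.mono hsub) fun t ht =>
    hρ0 t (hsub ht)

theorem intervalIntegral_le_setIntegral {f : ℝ → ℝ} {s : Set ℝ} {a b : ℝ} (hab : a ≤ b)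
    (hs : MeasurableSet s) (hf : IntegrableOn f s) (hf0 : ∀ t ∈ s, 0 ≤ f t)
    (hsub : Ioc a b ⊆ s) :
    ∫ t in a..b, f t ≤ ∫ t in s, f t := by
  rw [intervalIntegral.integral_of_le hab]
  exact setIntegral_mono_set hf (ae_restrict_of_forall_mem hs hf0) hsub.eventuallyLE

theorem sq_sub_le_integral_mul_integral_inv_of_ordConnected {f ρ : ℝ → ℝ} {s : Set ℝ}
    (hs : IsOpen s) (hs' : OrdConnected s) (hf : ContDiffOn ℝ 1 f s) (hρ : ContinuousOn ρ s)
    (hρ0 : ∀ t ∈ s, 0 < ρ t) (hE : IntegrableOn (fun t => ρ t * deriv f t ^ 2) s)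
    {x y : ℝ} (hx : x ∈ s) (hy : y ∈ s) :
    (f x - f y) ^ 2 ≤
      (∫ t in s, ρ t * deriv f t ^ 2) * ∫ t in min x y..max x y, (ρ t)⁻¹ := by
  have hsub : Icc (min x y) (max x y) ⊆ s := hs'.uIcc_subset hx hy
  have hnonneg : ∀ t ∈ s, 0 ≤ ρ t * deriv f t ^ 2 := fun t ht =>
    mul_nonneg (hρ0 t ht).le (sq_nonneg _)
  calc (f x - f y) ^ 2 = (f (max x y) - f (min x y)) ^ 2 := by
        rcases le_total x y with h | h
        · rw [min_eq_left h, max_eq_right h]; ring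
        · rw [min_eq_right h, max_eq_left h]
    _ ≤ (∫ t in min x y..max x y, ρ t * deriv f t ^ 2) *
          ∫ t in min x y..max x y, (ρ t)⁻¹ :=
        sq_sub_le_integral_mul_integral_inv hs hf hρ hρ0 min_le_max hsub
    _ ≤ _ := by
        gcongr
        · exact intervalIntegral.integral_nonneg min_le_max fun t ht =>
            inv_nonneg.2 (hρ0 t (hsub ht)).le
        · exact intervalIntegral_le_setIntegral min_le_max hs.measurableSet hE hnonneg
            (Ioc_subset_Icc_self.trans hsub)

theorem rpow_neg_le_two_rpow {t r : ℝ} (hr : 0 ≤ r) (ht : 1 / 2 ≤ t) :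
    t ^ (-r) ≤ 2 ^ r := by
  have ht0 : 0 < t := by linarith
  rw [rpow_neg ht0.le, ← inv_rpow ht0.le]
  exact rpow_le_rpow (by positivity) (inv_le_of_inv_le₀ (by norm_num) (by linarith)) hr

theorem rpow_half_sq {x : ℝ} (hx : 0 ≤ x) (r : ℝ) : (x ^ (r / 2)) ^ 2 = x ^ r := by
  rw [← rpow_mul_natCast hx]
  norm_num

theorem integral_rpow_neg_le {p a b : ℝ} (hp : 0 < p) (ha : 0 < a) (hab : a ≤ b) :
    ∫ t in a..b, t ^ (-(p + 1)) ≤ a ^ (-p) / p := by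
  have hzero : (0 : ℝ) ∉ uIcc a b := by
    rw [uIcc_of_le hab]; exact fun h => (h.1.trans_lt' ha).false
  rw [integral_rpow (Or.inr ⟨by linarith, hzero⟩), show -(p + 1) + 1 = -p by ring, div_neg,
    ← neg_div, neg_sub]
  gcongr
  exact sub_le_self _ (rpow_nonneg (ha.trans_le hab).le _)

noncomputable def energyWeight (p q t : ℝ) : ℝ := t * (1 - t) * (t ^ p * (1 - t) ^ q)

section

variable {p q t : ℝ}

theorem energyWeight_pos (ht : t ∈ Ioo 0 1) : 0 < energyWeight p q t := by
  have h0 : 0 < t := ht.1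
  have h1 : 0 < 1 - t := sub_pos.2 ht.2
  unfold energyWeight
  positivity

theorem continuousOn_energyWeight : ContinuousOn (energyWeight p q) (Ioo 0 1) := by
  unfold energyWeight
  exact ContinuousOn.mul (by fun_prop) <| ContinuousOn.mul
    (continuousOn_id.rpow_const fun t ht => Or.inl ht.1.ne')
    ((continuousOn_const.sub continuousOn_id).rpow_const fun t ht =>
      Or.inl (sub_pos.2 ht.2).ne')

theorem energyWeight_eq (ht : t ∈ Ioo 0 1) :
    energyWeight p q t = t ^ (p + 1) * (1 - t) ^ (q + 1) := by
  rw [energyWeight, rpow_add_one ht.1.ne', rpow_add_one (sub_pos.2 ht.2).ne']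
  ring

theorem inv_energyWeight_le (hp : 0 ≤ p) (hq : 0 ≤ q) (ht : t ∈ Ioo 0 1) :
    (energyWeight p q t)⁻¹ ≤
      2 ^ (q + 1) * t ^ (-(p + 1)) + 2 ^ (p + 1) * (1 - t) ^ (-(q + 1)) := by
  have h1 : 0 < 1 - t := sub_pos.2 ht.2
  rw [energyWeight_eq ht, mul_inv, ← rpow_neg ht.1.le, ← rpow_neg h1.le]
  have hA : 0 < t ^ (-(p + 1)) := rpow_pos_of_pos ht.1 _
  have hB : 0 < (1 - t) ^ (-(q + 1)) := rpow_pos_of_pos h1 _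
  rcases le_total t (1 / 2) with h | h
  · have := rpow_neg_le_two_rpow (t := 1 - t) (by linarith : 0 ≤ q + 1) (by linarith)
    nlinarith [rpow_pos_of_pos (two_pos : (0:ℝ) < 2) (p + 1)]
  · have := rpow_neg_le_two_rpow (by linarith : 0 ≤ p + 1) h
    nlinarith [rpow_pos_of_pos (two_pos : (0:ℝ) < 2) (q + 1)]

end

theorem integral_inv_energyWeight_le {p q a b : ℝ} (hp : 0 < p) (hq : 0 < q) (ha : 0 < a)
    (hab : a ≤ b) (hb : b < 1) :
    ∫ t in a..b, (energyWeight p q t)⁻¹ ≤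
      2 ^ (q + 1) * (a ^ (-p) / p) + 2 ^ (p + 1) * ((1 - b) ^ (-q) / q) := by
  have hsub : Icc a b ⊆ Ioo 0 1 := Icc_subset_Ioo ha hb
  have hcont : ContinuousOn (fun t => 2 ^ (q + 1) * t ^ (-(p + 1))) (Icc a b) :=
    continuousOn_const.mul (continuousOn_id.rpow_const fun t ht => Or.inl (hsub ht).1.ne')
  have hcont' : ContinuousOn (fun t => 2 ^ (p + 1) * (1 - t) ^ (-(q + 1))) (Icc a b) :=
    continuousOn_const.mul ((continuousOn_const.sub continuousOn_id).rpow_const fun t ht =>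
      Or.inl (sub_pos.2 (hsub ht).2).ne')
  calc ∫ t in a..b, (energyWeight p q t)⁻¹
      ≤ ∫ t in a..b, (2 ^ (q + 1) * t ^ (-(p + 1)) + 2 ^ (p + 1) * (1 - t) ^ (-(q + 1))) := by
        refine intervalIntegral.integral_mono_on hab ?_ ?_ fun t ht =>
          inv_energyWeight_le hp.le hq.le (hsub ht)
        · exact ((continuousOn_energyWeight.mono hsub).inv₀ fun t ht =>
            (energyWeight_pos (hsub ht)).ne').intervalIntegrable_of_Icc hab
        · exact (hcont.add hcont').intervalIntegrable_of_Icc hab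
    _ = 2 ^ (q + 1) * (∫ t in a..b, t ^ (-(p + 1))) +
          2 ^ (p + 1) * ∫ t in 1 - b..1 - a, t ^ (-(q + 1)) := by
        rw [intervalIntegral.integral_add (hcont.intervalIntegrable_of_Icc hab)
          (hcont'.intervalIntegrable_of_Icc hab), intervalIntegral.integral_const_mul,
          intervalIntegral.integral_const_mul, intervalIntegral.integral_comp_sub_left
            (fun t => t ^ (-(q + 1)))]
    _ ≤ _ := by
        gcongr
        · exact integral_rpow_neg_le hp ha hab
        · exact integral_rpow_neg_le hq (by linarith) (by linarith)

theorem exists_integral_inv_energyWeight_le {p q : ℝ} (hp : 0 < p) (hq : 0 < q) :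
    ∃ K, 0 ≤ K ∧ ∀ x ∈ Ioo (0 : ℝ) 1, ∫ t in min x (1 / 2)..max x (1 / 2),
      (energyWeight p q t)⁻¹ ≤ K * (x ^ (-p / 2) * (1 - x) ^ (-q / 2)) ^ 2 := by
  refine ⟨2 ^ (q + 1) * (2 ^ p / p) + 2 ^ (p + 1) * (2 ^ q / q), by positivity, fun x hx => ?_⟩
  have h1x : 0 < 1 - x := sub_pos.2 hx.2
  -- both endpoints stay within a factor `2` of the boundary distances of `x`
  have hmin : (min x (1 / 2)) ^ (-p) ≤ 2 ^ p * x ^ (-p) := by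
    calc (min x (1 / 2)) ^ (-p) ≤ (x / 2) ^ (-p) :=
          rpow_le_rpow_of_nonpos (by linarith [hx.1])
            (le_min (by linarith [hx.1]) (by linarith [hx.2])) (by linarith)
      _ = 2 ^ p * x ^ (-p) := by
          rw [div_rpow hx.1.le zero_le_two, rpow_neg zero_le_two, div_inv_eq_mul, mul_comm]
  have hmax : (1 - max x (1 / 2)) ^ (-q) ≤ 2 ^ q * (1 - x) ^ (-q) := by
    calc (1 - max x (1 / 2)) ^ (-q) ≤ ((1 - x) / 2) ^ (-q) :=
          rpow_le_rpow_of_nonpos (by linarith)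
            (le_sub_comm.1 (max_le (by linarith [hx.2]) (by linarith [hx.1]))) (by linarith)
      _ = 2 ^ q * (1 - x) ^ (-q) := by
          rw [div_rpow h1x.le zero_le_two, rpow_neg zero_le_two, div_inv_eq_mul, mul_comm]
  have hX : 1 ≤ x ^ (-p) := one_le_rpow_of_pos_of_le_one_of_nonpos hx.1 hx.2.le (by linarith)
  have hY : 1 ≤ (1 - x) ^ (-q) :=
    one_le_rpow_of_pos_of_le_one_of_nonpos h1x (by linarith [hx.1]) (by linarith)
  calc ∫ t in min x (1 / 2)..max x (1 / 2), (energyWeight p q t)⁻¹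
      ≤ 2 ^ (q + 1) * ((min x (1 / 2)) ^ (-p) / p)
          + 2 ^ (p + 1) * ((1 - max x (1 / 2)) ^ (-q) / q) :=
        integral_inv_energyWeight_le hp hq (lt_min hx.1 one_half_pos) min_le_max
          (max_lt hx.2 one_half_lt_one)
    _ ≤ 2 ^ (q + 1) * (2 ^ p * x ^ (-p) / p) + 2 ^ (p + 1) * (2 ^ q * (1 - x) ^ (-q) / q) := by
        gcongr
    _ ≤ 2 ^ (q + 1) * (2 ^ p * (x ^ (-p) * (1 - x) ^ (-q)) / p)
          + 2 ^ (p + 1) * (2 ^ q * (x ^ (-p) * (1 - x) ^ (-q)) / q) := by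
        gcongr
        · exact le_mul_of_one_le_right (by linarith) hY
        · exact le_mul_of_one_le_left (by linarith) hX
    _ = _ := by rw [mul_pow, rpow_half_sq hx.1.le, rpow_half_sq h1x.le]; ring

theorem pointwise_bound_X1 (N : ℝ) (hN : 4 ≤ N) (v : ℝ → ℝ)
    (hv : ContDiffOn ℝ 1 v (Ioo 0 1))
    (hvX1 : IntegrableOn
      (fun x => (x*(1-x)) * (deriv v x)^2 * (x ^ ((3:ℝ)/2) * (1-x) ^ (N/2 - 1)))
      (Ioo 0 1)) :
    ∃ C > 0, ∀ x ∈ Ioo (0:ℝ) 1,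
      |v x| ≤ C * x ^ (-(3:ℝ)/4) * (1-x) ^ (-N/4 + 1/2) := by
  set w := energyWeight (3 / 2) (N / 2 - 1)
  have hw : ∀ t, t * (1 - t) * deriv v t ^ 2 * (t ^ ((3:ℝ)/2) * (1 - t) ^ (N/2 - 1))
      = w t * deriv v t ^ 2 := fun t => by simp only [w, energyWeight]; ring
  simp only [hw] at hvX1
  set E := ∫ t in Ioo (0:ℝ) 1, w t * deriv v t ^ 2
  have hE : 0 ≤ E := setIntegral_nonneg measurableSet_Ioo fun t ht =>
    mul_nonneg (energyWeight_pos ht).le (sq_nonneg _)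
  obtain ⟨K, hK0, hK⟩ := exists_integral_inv_energyWeight_le (p := 3 / 2) (q := N / 2 - 1)
    (by norm_num) (by linarith)
  refine ⟨|v (1 / 2)| + √(E * K) + 1, by positivity, fun x hx => ?_⟩
  rw [mul_assoc]
  set φ := x ^ (-(3:ℝ)/4) * (1-x) ^ (-N/4 + 1/2)
  have hφ : x ^ (-(3 / 2 : ℝ) / 2) * (1 - x) ^ (-(N / 2 - 1) / 2) = φ := by congr 2 <;> ring
  have hφ1 : 1 ≤ φ := one_le_mul_of_one_le_of_one_le
    (one_le_rpow_of_pos_of_le_one_of_nonpos hx.1 hx.2.le (by norm_num))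
    (one_le_rpow_of_pos_of_le_one_of_nonpos (sub_pos.2 hx.2) (by linarith [hx.1]) (by linarith))
  have hsq : (v x - v (1 / 2)) ^ 2 ≤ (√(E * K) * φ) ^ 2 := calc
    (v x - v (1 / 2)) ^ 2 ≤ E * ∫ t in min x (1 / 2)..max x (1 / 2), (w t)⁻¹ :=
      sq_sub_le_integral_mul_integral_inv_of_ordConnected isOpen_Ioo ordConnected_Ioo hv
        continuousOn_energyWeight (fun t => energyWeight_pos) hvX1 hx
        ⟨one_half_pos, one_half_lt_one⟩
    _ ≤ E * (K * φ ^ 2) := by gcongr; rw [← hφ]; exact hK x hx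
    _ = (√(E * K) * φ) ^ 2 := by rw [mul_pow √(E * K), sq_sqrt (mul_nonneg hE hK0)]; ring
  have hdiff := abs_le_of_sq_le_sq hsq (by positivity)
  nlinarith [abs_sub_abs_le_abs_sub (v x) (v (1 / 2)), abs_nonneg (v (1 / 2)),
    sqrt_nonneg (E * K)]
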